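/- arXiv:1909.06981 — 2 statements merged into one kernel-verified Lean document; each statement's English description precedes it below -/
import Mathlib

section
/- For 0 < α < 1, ε ∈ [0, 1 − 1/d], and probability vectors p, q in ℝ^d with TV(p,q) ≤ ε, the α-Rényi entropies satisfy |H_α(p) − H_α(q)| ≤ (1/(1−α))·log₂((1−ε)^α + (d−1)^{1−α}·ε^α). -/
/-!
Write `m = min p q` and `t = 1 - ∑ m = TV(p, q) ≤ ε`. Since `∑ p = ∑ q`, some coordinate has
`p i₀ ≤ q i₀`, so `p - m` vanishes there; subadditivity of `x ↦ x ^ α` and Hölder on the remaining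
`d - 1` coordinates give `∑ p ^ α ≤ ∑ m ^ α + (d - 1) ^ (1 - α) t ^ α`. Hölder with weights
`(1 - ε, ε)` in each coordinate gives `(1 - ε) ^ (1 - α) ∑ m ^ α + ε ^ (1 - α) t ^ α ≤ ∑ q ^ α`.
With `∑ m ^ α ≥ (1 - ε) ^ α` and `t ^ α ≤ ε ^ α`, an algebraic identity turns these into
`∑ p ^ α ≤ ((1 - ε) ^ α + (d - 1) ^ (1 - α) ε ^ α) ∑ q ^ α`, and symmetrically; taking
logarithms gives the bound.
-/

open Finset Real

section
variable {ι : Type*} {α : ℝ}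

theorem rpow_sum_le_sum_rpow (hα0 : 0 < α) (hα1 : α ≤ 1) (s : Finset ι) {f : ι → ℝ}
    (hf : ∀ i ∈ s, 0 ≤ f i) : (∑ i ∈ s, f i) ^ α ≤ ∑ i ∈ s, f i ^ α := by
  induction s using Finset.cons_induction with
  | empty => simp [zero_rpow hα0.ne']
  | cons i s hi ih =>
    simp only [sum_cons, forall_mem_cons] at hf ⊢
    calc (f i + ∑ j ∈ s, f j) ^ α ≤ f i ^ α + (∑ j ∈ s, f j) ^ α :=
          rpow_add_le_add_rpow hf.1 (sum_nonneg hf.2) hα0.le hα1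
      _ ≤ f i ^ α + ∑ j ∈ s, f j ^ α := by gcongr; exact ih hf.2

theorem sum_rpow_one_sub_mul_rpow_le (hα0 : 0 < α) (hα1 : α < 1) (s : Finset ι) {w f : ι → ℝ}
    (hw : ∀ i ∈ s, 0 ≤ w i) (hf : ∀ i ∈ s, 0 ≤ f i) :
    ∑ i ∈ s, w i ^ (1 - α) * f i ^ α ≤ (∑ i ∈ s, w i) ^ (1 - α) * (∑ i ∈ s, f i) ^ α := by
  have h := inner_le_Lp_mul_Lq_of_nonneg s (HolderConjugate.one_sub_inv_inv hα0 hα1)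
    (f := fun i => w i ^ (1 - α)) (g := fun i => f i ^ α)
    (fun i hi => rpow_nonneg (hw i hi) _) (fun i hi => rpow_nonneg (hf i hi) _)
  simp only [one_div, inv_inv] at h
  convert h using 3 <;> refine sum_congr rfl fun i hi => ?_
  · rw [rpow_rpow_inv (hw i hi) (by linarith)]
  · rw [rpow_rpow_inv (hf i hi) hα0.ne']

theorem sum_rpow_le_sum_rpow_add_card_sub_one_mul (hα0 : 0 < α) (hα1 : α < 1) {s : Finset ι}
    {p m : ι → ℝ} (hm : ∀ i ∈ s, 0 ≤ m i) (hmp : ∀ i ∈ s, m i ≤ p i) {i₀ : ι} (hi₀s : i₀ ∈ s)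
    (hi₀ : m i₀ = p i₀) :
    ∑ i ∈ s, p i ^ α ≤
      ∑ i ∈ s, m i ^ α + ((#s : ℝ) - 1) ^ (1 - α) * (∑ i ∈ s, p i - ∑ i ∈ s, m i) ^ α := by
  classical
  have ha : ∀ i ∈ s, 0 ≤ p i - m i := fun i hi => sub_nonneg.2 (hmp i hi)
  have hi₀a : p i₀ - m i₀ = 0 := by rw [hi₀, sub_self]
  have hsub : ∑ i ∈ s, p i ^ α ≤ ∑ i ∈ s, m i ^ α + ∑ i ∈ s, (p i - m i) ^ α := by
    rw [← sum_add_distrib]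
    refine sum_le_sum fun i hi => ?_
    simpa using rpow_add_le_add_rpow (hm i hi) (ha i hi) hα0.le hα1.le
  -- Since `p - m` vanishes at `i₀`, Hölder only needs to be applied to the other `#s - 1` terms.
  have hholder := sum_rpow_one_sub_mul_rpow_le hα0 hα1 (s.erase i₀) (w := fun _ => 1)
    (fun _ _ => zero_le_one) (fun i hi => ha i (mem_of_mem_erase hi))
  simp only [one_rpow, one_mul, sum_const, card_erase_of_mem hi₀s, nsmul_eq_mul, mul_one] at hholder
  rw [sum_erase _ (by rw [hi₀a, zero_rpow hα0.ne']), sum_erase (f := fun i => p i - m i) _ hi₀a,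
    sum_sub_distrib, Nat.cast_sub (card_pos.2 ⟨i₀, hi₀s⟩), Nat.cast_one] at hholder
  linarith

theorem one_sub_rpow_mul_sum_rpow_add_rpow_mul_le (hα0 : 0 < α) (hα1 : α < 1) {ε : ℝ}
    (hε0 : 0 ≤ ε) (hε1 : ε ≤ 1) {s : Finset ι} {q m : ι → ℝ} (hm : ∀ i ∈ s, 0 ≤ m i)
    (hmq : ∀ i ∈ s, m i ≤ q i) :
    (1 - ε) ^ (1 - α) * ∑ i ∈ s, m i ^ α + ε ^ (1 - α) * (∑ i ∈ s, q i - ∑ i ∈ s, m i) ^ α ≤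
      ∑ i ∈ s, q i ^ α := by
  have hb : ∀ i ∈ s, 0 ≤ q i - m i := fun i hi => sub_nonneg.2 (hmq i hi)
  have hpair : ∀ i ∈ s,
      (1 - ε) ^ (1 - α) * m i ^ α + ε ^ (1 - α) * (q i - m i) ^ α ≤ q i ^ α := fun i hi => by
    have := sum_rpow_one_sub_mul_rpow_le hα0 hα1 univ (w := ![1 - ε, ε]) (f := ![m i, q i - m i])
      (by simp [Fin.forall_fin_two, hε0, hε1]) (by simp [Fin.forall_fin_two, hm i hi, hb i hi])
    simpa [Fin.sum_univ_two] using this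
  have hsub : (∑ i ∈ s, q i - ∑ i ∈ s, m i) ^ α ≤ ∑ i ∈ s, (q i - m i) ^ α := by
    rw [← sum_sub_distrib]
    exact rpow_sum_le_sum_rpow hα0 hα1.le s hb
  calc (1 - ε) ^ (1 - α) * ∑ i ∈ s, m i ^ α + ε ^ (1 - α) * (∑ i ∈ s, q i - ∑ i ∈ s, m i) ^ α
      ≤ ∑ i ∈ s, ((1 - ε) ^ (1 - α) * m i ^ α + ε ^ (1 - α) * (q i - m i) ^ α) := by
        rw [sum_add_distrib, ← mul_sum, ← mul_sum]
        gcongr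
    _ ≤ ∑ i ∈ s, q i ^ α := sum_le_sum hpair

theorem add_mul_le_mul_add_mul_of_mul_add_mul_eq_one {x y u v c M T : ℝ} (hx : 0 ≤ x)
    (hu : 0 ≤ u) (h : x * y + u * v = 1) (hv : v ≤ c * y) (hM : x ≤ M) (hT : T ≤ u) :
    M + c * T ≤ (x + c * u) * (y * M + v * T) := by
  -- The difference of the two sides is `(M - x) * u * (c * y - v) + (u - T) * x * (c * y - v)`.
  have h₁ := mul_nonneg (mul_nonneg (sub_nonneg.2 hM) hu) (sub_nonneg.2 hv)
  have h₂ := mul_nonneg (mul_nonneg (sub_nonneg.2 hT) hx) (sub_nonneg.2 hv)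
  linear_combination h₁ + h₂ - (M + c * T) * h

theorem sum_rpow_le_mul_sum_rpow_of_tv_le [Fintype ι] (hα0 : 0 < α) (hα1 : α < 1) {ε : ℝ}
    (hε : ε ≤ 1 - 1 / Fintype.card ι) {p q : ι → ℝ}
    (hp : ∀ i, 0 ≤ p i) (hp1 : ∑ i, p i = 1) (hq : ∀ i, 0 ≤ q i) (hq1 : ∑ i, q i = 1)
    (hTV : (1 / 2) * ∑ i, |p i - q i| ≤ ε) :
    ∑ i, p i ^ α ≤
      ((1 - ε) ^ α + ((Fintype.card ι : ℝ) - 1) ^ (1 - α) * ε ^ α) * ∑ i, q i ^ α := by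
  set m : ι → ℝ := fun i => min (p i) (q i)
  set n : ℝ := (Fintype.card ι : ℝ) - 1
  set t : ℝ := 1 - ∑ i, m i
  set M : ℝ := ∑ i, m i ^ α
  have hm : ∀ i, 0 ≤ m i := fun i => le_min (hp i) (hq i)
  have htv : ∑ i, |p i - q i| = 2 * t := by
    have h : ∀ i, |p i - q i| = p i + q i - 2 * m i := fun i => by
      rw [← max_sub_min_eq_abs']; linarith [min_add_max (p i) (q i)]
    simp only [h, sum_sub_distrib, sum_add_distrib, ← mul_sum, hp1, hq1, t]; ring
  have ht0 : 0 ≤ t := by linarith [sum_nonneg fun i (_ : i ∈ univ) => abs_nonneg (p i - q i)]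
  have htε : t ≤ ε := by linarith
  have hε0 : 0 ≤ ε := ht0.trans htε
  have hne : (univ : Finset ι).Nonempty := nonempty_of_sum_ne_zero (hp1 ▸ one_ne_zero)
  have hcard : (1 : ℝ) ≤ Fintype.card ι := by
    rw [Nat.one_le_cast, ← card_univ]; exact hne.card_pos
  have hn : 0 ≤ n := sub_nonneg.2 hcard
  have hεn : ε ≤ n * (1 - ε) := by
    rw [le_sub_comm, div_le_iff₀ (by linarith)] at hε
    linarith [show n * (1 - ε) = (1 - ε) * Fintype.card ι - (1 - ε) by ring]
  have hε1 : ε ≤ 1 := by nlinarith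
  obtain ⟨i₀, -, hi₀⟩ := exists_le_of_sum_le hne (hp1.trans hq1.symm).le
  have hA : ∑ i, p i ^ α ≤ M + n ^ (1 - α) * t ^ α := by
    simpa [hp1, card_univ] using sum_rpow_le_sum_rpow_add_card_sub_one_mul hα0 hα1
      (fun i _ => hm i) (fun i _ => min_le_left _ _) (mem_univ i₀) (min_eq_left hi₀)
  have hB : (1 - ε) ^ (1 - α) * M + ε ^ (1 - α) * t ^ α ≤ ∑ i, q i ^ α := by
    simpa [hq1] using one_sub_rpow_mul_sum_rpow_add_rpow_mul_le hα0 hα1 hε0 hε1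
      (fun i _ => hm i) (fun i (_ : i ∈ univ) => min_le_right _ _)
  have hM : (1 - ε) ^ α ≤ M :=
    calc (1 - ε) ^ α ≤ (1 - t) ^ α := by gcongr
      _ ≤ M := by
        rw [sub_sub_cancel]; exact rpow_sum_le_sum_rpow hα0 hα1.le univ fun i _ => hm i
  have hT : t ^ α ≤ ε ^ α := by gcongr
  have hv : ε ^ (1 - α) ≤ n ^ (1 - α) * (1 - ε) ^ (1 - α) := by
    rw [← mul_rpow hn (by linarith)]; gcongr
  have hxyuv : (1 - ε) ^ α * (1 - ε) ^ (1 - α) + ε ^ α * ε ^ (1 - α) = 1 := by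
    rw [← rpow_add' (by linarith) (by simp), ← rpow_add' hε0 (by simp), add_sub_cancel,
      rpow_one, rpow_one, sub_add_cancel]
  calc ∑ i, p i ^ α ≤ M + n ^ (1 - α) * t ^ α := hA
    _ ≤ ((1 - ε) ^ α + n ^ (1 - α) * ε ^ α) * ((1 - ε) ^ (1 - α) * M + ε ^ (1 - α) * t ^ α) :=
      add_mul_le_mul_add_mul_of_mul_add_mul_eq_one (by positivity) (by positivity) hxyuv hv hM hT
    _ ≤ ((1 - ε) ^ α + n ^ (1 - α) * ε ^ α) * ∑ i, q i ^ α := by gcongr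

theorem abs_logb_sub_logb_le {b c x y : ℝ} (hb : 1 < b) (hx : 0 < x) (hy : 0 < y)
    (hxy : x ≤ c * y) (hyx : y ≤ c * x) : |logb b x - logb b y| ≤ logb b c := by
  have hc : 0 < c := pos_of_mul_pos_left (hx.trans_le hxy) hy.le
  have key : ∀ {x y : ℝ}, 0 < x → 0 < y → x ≤ c * y → logb b x - logb b y ≤ logb b c :=
    fun hx hy h => by
      have := logb_le_logb_of_le hb hx h
      rw [logb_mul hc.ne' hy.ne'] at this
      linarith
  exact abs_sub_le_iff.2 ⟨key hx hy hxy, key hy hx hyx⟩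

end

theorem stmt12_general {d : ℕ} (α : ℝ) (hα0 : 0 < α) (hα1 : α < 1)
    (ε : ℝ) (hε1 : ε ≤ 1 - 1 / d)
    (H : (Fin d → ℝ) → ℝ)
    (hH : ∀ p, H p = (1 / (1 - α)) * Real.logb 2 (∑ i, p i ^ α))
    (p q : Fin d → ℝ)
    (hp : (∀ i, 0 ≤ p i) ∧ ∑ i, p i = 1) (hq : (∀ i, 0 ≤ q i) ∧ ∑ i, q i = 1)
    (hTV : (1 / 2) * ∑ i, |p i - q i| ≤ ε) :
    |H p - H q| ≤ (1 / (1 - α)) *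
      Real.logb 2 ((1 - ε) ^ α + ((d : ℝ) - 1) ^ (1 - α) * ε ^ α) := by
  have hε : ε ≤ 1 - 1 / Fintype.card (Fin d) := by rwa [Fintype.card_fin]
  have hTV' : (1 / 2) * ∑ i, |q i - p i| ≤ ε := by simpa only [abs_sub_comm] using hTV
  have hpq := sum_rpow_le_mul_sum_rpow_of_tv_le hα0 hα1 hε hp.1 hp.2 hq.1 hq.2 hTV
  have hqp := sum_rpow_le_mul_sum_rpow_of_tv_le hα0 hα1 hε hq.1 hq.2 hp.1 hp.2 hTV'
  rw [Fintype.card_fin] at hpq hqp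
  have hpos : ∀ r : Fin d → ℝ, (∀ i, 0 ≤ r i) → ∑ i, r i = 1 → 0 < ∑ i, r i ^ α :=
    fun r hr hr1 =>
      calc (0 : ℝ) < (∑ i, r i) ^ α := by rw [hr1, one_rpow]; exact one_pos
        _ ≤ ∑ i, r i ^ α := rpow_sum_le_sum_rpow hα0 hα1.le univ fun i _ => hr i
  rw [hH, hH, ← mul_sub, abs_mul, abs_of_pos (one_div_pos.2 (sub_pos.2 hα1))]
  gcongr
  exact abs_logb_sub_logb_le one_lt_two (hpos p hp.1 hp.2) (hpos q hq.1 hq.2) hpq hqp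

/-- Audenaert's tight uniform continuity bound for the α-Rényi entropy, 0 < α < 1. -/
theorem stmt12 {d : ℕ} (hd : 2 ≤ d) (α : ℝ) (hα0 : 0 < α) (hα1 : α < 1)
    (ε : ℝ) (hε0 : 0 ≤ ε) (hε1 : ε ≤ 1 - 1 / d)
    (H : (Fin d → ℝ) → ℝ)
    (hH : ∀ p, H p = (1 / (1 - α)) * Real.logb 2 (∑ i, p i ^ α))
    (p q : Fin d → ℝ)
    (hp : (∀ i, 0 ≤ p i) ∧ ∑ i, p i = 1) (hq : (∀ i, 0 ≤ q i) ∧ ∑ i, q i = 1)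
    (hTV : (1 / 2) * ∑ i, |p i - q i| ≤ ε) :
    |H p - H q| ≤ (1 / (1 - α)) *
      Real.logb 2 ((1 - ε) ^ α + ((d : ℝ) - 1) ^ (1 - α) * ε ^ α) :=
  stmt12_general α hα0 hα1 ε hε1 H hH p q hp hq hTV
end

section
/- For α > 1, ε ∈ [0, 1 − 1/d], and probability vectors p, q in ℝ^d with TV(p,q) ≤ ε, the α-Tsallis entropies satisfy |T_α(p) − T_α(q)| ≤ (1/(1−α))·(ε^α·(d−1)^{1−α} + (1−ε)^α − 1), with equality when q = (1,0,...,0) and p = (1−ε, ε/(d−1), ..., ε/(d−1)). -/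
/-!
Write `S p = ∑ i, p i ^ α`, so that `|T p - T q| = |S p - S q| / (α - 1)`. With `r = min p q`
we have `p = r + (p - q)⁺` and `q = r + (p - q)⁻`, and both excess vectors have mass
`t = TV(p, q)`. Since `x ↦ x ^ α` is convex, its increments grow with the base point, which
gives `S q - S r ≤ 1 - (1 - t) ^ α`; superadditivity gives `S r + S (p - q)⁺ ≤ S p`; and
`(p - q)⁺` vanishes at some coordinate, so the power-mean inequality on the remaining `d - 1`
coordinates gives `S (p - q)⁺ ≥ t ^ α (d - 1) ^ (1 - α)`. Hence `S q - S p ≤ g t` with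
`g t = 1 - (1 - t) ^ α - t ^ α (d - 1) ^ (1 - α)`, and `g` increases on `[0, 1 - 1 / d]`
because `g' t ≥ 0` exactly when `t / (d - 1) ≤ 1 - t`. The pair `(1 - ε, ε / (d - 1), …)`,
`(1, 0, …)` attains `g ε`.
-/

open Finset Real

theorem ConvexOn.map_add_sub_map_le_map_add_sub_map {D : Set ℝ} {f : ℝ → ℝ}
    (hf : ConvexOn ℝ D f) {a b s : ℝ} (ha : a ∈ D) (hbs : b + s ∈ D) (hab : a ≤ b)
    (hs : 0 ≤ s) : f (a + s) - f a ≤ f (b + s) - f b := by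
  rcases (show a ≤ b + s by linarith).eq_or_lt with h | h
  · obtain rfl : b = a := by linarith
    obtain rfl : s = 0 := by linarith
    simp
  -- `a + s` and `b` are the two convex combinations of `a`, `b + s` with weights swapped.
  set θ := s / (b + s - a)
  have hθs : θ * (b + s - a) = s := div_mul_cancel₀ s (by linarith)
  have hθ0 : 0 ≤ θ := div_nonneg hs (by linarith)
  have hθ1 : θ ≤ 1 := (div_le_one (by linarith)).2 (by linarith)
  have h₁ := hf.2 ha hbs (sub_nonneg.2 hθ1) hθ0 (by ring)
  have h₂ := hf.2 ha hbs hθ0 (sub_nonneg.2 hθ1) (by ring)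
  simp only [smul_eq_mul] at h₁ h₂
  rw [show (1 - θ) * a + θ * (b + s) = a + s by linear_combination hθs] at h₁
  rw [show θ * a + (1 - θ) * (b + s) = b by linear_combination -hθs] at h₂
  linarith

theorem ConvexOn.sum_map_add_sub_map_le {ι : Type*} {f : ℝ → ℝ}
    (hf : ConvexOn ℝ (Set.Ici 0) f) (s : Finset ι) {r u : ι → ℝ} (hr : ∀ i, 0 ≤ r i)
    (hu : ∀ i, 0 ≤ u i) :
    ∑ i ∈ s, (f (r i + u i) - f (r i)) ≤
      f ((∑ i ∈ s, r i) + ∑ i ∈ s, u i) - f (∑ i ∈ s, r i) := by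
  classical
  induction s using Finset.induction_on with
  | empty => simp
  | insert j s hj ih =>
    rw [sum_insert hj, sum_insert hj, sum_insert hj]
    set R := ∑ i ∈ s, r i
    set U := ∑ i ∈ s, u i
    have hR : 0 ≤ R := sum_nonneg fun i _ => hr i
    have hU : 0 ≤ U := sum_nonneg fun i _ => hu i
    have h_head := hf.map_add_sub_map_le_map_add_sub_map (b := r j + R + U) (hr j)
      (by simp only [Set.mem_Ici]; linarith [hr j, hu j]) (by linarith) (hu j)
    have h_tail := hf.map_add_sub_map_le_map_add_sub_map (b := r j + R) hR
      (by simp only [Set.mem_Ici]; linarith [hr j]) (by linarith [hr j]) hU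
    rw [show r j + R + (u j + U) = r j + R + U + u j by ring]
    linarith

theorem rpow_sum_mul_card_sub_one_rpow_le_sum_rpow {ι : Type*} [Fintype ι] [Nontrivial ι]
    {α : ℝ} (hα : 1 ≤ α) {v : ι → ℝ} (hv : ∀ i, 0 ≤ v i) {i₀ : ι} (hi₀ : v i₀ = 0) :
    (∑ i, v i) ^ α * ((Fintype.card ι : ℝ) - 1) ^ (1 - α) ≤ ∑ i, v i ^ α := by
  classical
  set s := univ.erase i₀
  have hcard : (#s : ℝ) = Fintype.card ι - 1 := by
    rw [card_erase_of_mem (mem_univ _), card_univ, Nat.cast_sub Fintype.card_pos, Nat.cast_one]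
  have hn : (0 : ℝ) < #s := by
    rw [hcard, sub_pos, Nat.one_lt_cast]; exact Fintype.one_lt_card
  have hsum : ∑ i, v i = ∑ i ∈ s, v i := by
    rw [← add_sum_erase _ _ (mem_univ i₀), hi₀, zero_add]
  have hpow := rpow_sum_le_const_mul_sum_rpow_of_nonneg s hα fun i _ => hv i
  calc (∑ i, v i) ^ α * ((Fintype.card ι : ℝ) - 1) ^ (1 - α)
      ≤ (#s : ℝ) ^ (α - 1) * (∑ i ∈ s, v i ^ α) * (#s : ℝ) ^ (1 - α) := by
        rw [hsum, ← hcard]; gcongr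
    _ = ∑ i ∈ s, v i ^ α := by
        rw [mul_right_comm, ← rpow_add hn]; simp
    _ ≤ ∑ i, v i ^ α := sum_le_univ_sum_of_nonneg fun i => rpow_nonneg (hv i) _

noncomputable def powerSumGap (d α t : ℝ) : ℝ := 1 - (1 - t) ^ α - t ^ α * (d - 1) ^ (1 - α)

theorem hasDerivAt_powerSumGap {α d t : ℝ} (ht0 : 0 < t) (ht1 : t < 1) :
    HasDerivAt (powerSumGap d α)
      (α * ((1 - t) ^ (α - 1) - t ^ (α - 1) * (d - 1) ^ (1 - α))) t := by
  have H₁ := ((hasDerivAt_id t).const_sub 1).rpow_const (p := α) (Or.inl (sub_pos.2 ht1).ne')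
  have H₂ := hasDerivAt_rpow_const (x := t) (p := α) (Or.inl ht0.ne')
  exact (((hasDerivAt_const t 1).sub H₁).sub (H₂.mul_const _)).congr_deriv
    (by simp only [id]; ring)

theorem monotoneOn_powerSumGap {α d : ℝ} (hα : 1 ≤ α) (hd : 1 < d) :
    MonotoneOn (powerSumGap d α) (Set.Icc 0 (1 - 1 / d)) := by
  have hα0 : 0 ≤ α := by linarith
  have hd0 : 0 < d := by linarith
  have hd1 : 0 < d - 1 := by linarith
  have hderiv : ∀ t ∈ Set.Ioo 0 (1 - 1 / d), HasDerivAt (powerSumGap d α)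
      (α * ((1 - t) ^ (α - 1) - t ^ (α - 1) * (d - 1) ^ (1 - α))) t :=
    fun t ht => hasDerivAt_powerSumGap ht.1 (by linarith [ht.2, one_div_pos.2 hd0])
  refine monotoneOn_of_deriv_nonneg (convex_Icc _ _) ?_ ?_ ?_
  · have := continuous_rpow_const hα0
    unfold powerSumGap
    fun_prop
  · rw [interior_Icc]
    exact fun t ht => (hderiv t ht).differentiableAt.differentiableWithinAt
  · rw [interior_Icc]
    rintro t ⟨ht0, ht1⟩
    rw [(hderiv t ⟨ht0, ht1⟩).deriv]
    have hle : t / (d - 1) ≤ 1 - t := by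
      rw [lt_sub_comm, div_lt_iff₀ hd0] at ht1
      rw [div_le_iff₀ hd1]
      linarith
    have key : t ^ (α - 1) * (d - 1) ^ (1 - α) ≤ (1 - t) ^ (α - 1) := by
      calc t ^ (α - 1) * (d - 1) ^ (1 - α) = (t / (d - 1)) ^ (α - 1) := by
            rw [div_rpow ht0.le hd1.le, div_eq_mul_inv, ← rpow_neg hd1.le, neg_sub]
        _ ≤ (1 - t) ^ (α - 1) := by gcongr
    exact mul_nonneg hα0 (sub_nonneg.2 key)

theorem powerSumGap_nonneg {α d t : ℝ} (hα : 1 ≤ α) (hd : 1 < d)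
    (ht : t ∈ Set.Icc 0 (1 - 1 / d)) : 0 ≤ powerSumGap d α t := by
  have h0 : powerSumGap d α 0 = 0 := by
    simp [powerSumGap, zero_rpow (by linarith : α ≠ 0)]
  exact h0 ▸ monotoneOn_powerSumGap hα hd ⟨le_rfl, ht.1.trans ht.2⟩ ht ht.1

theorem sum_posPart_sub_eq_half_sum_abs_sub {ι : Type*} (s : Finset ι) {p q : ι → ℝ}
    (h : ∑ i ∈ s, p i = ∑ i ∈ s, q i) :
    ∑ i ∈ s, (p i - q i)⁺ = (1 / 2) * ∑ i ∈ s, |p i - q i| := by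
  have h₁ : ∑ i ∈ s, (p i - q i)⁺ - ∑ i ∈ s, (p i - q i)⁻ = 0 := by
    rw [← sum_sub_distrib]
    simp only [posPart_sub_negPart]
    rw [sum_sub_distrib, h, sub_self]
  have h₂ : ∑ i ∈ s, (p i - q i)⁺ + ∑ i ∈ s, (p i - q i)⁻ = ∑ i ∈ s, |p i - q i| := by
    rw [← sum_add_distrib]
    simp only [posPart_add_negPart]
  linarith

theorem sum_negPart_sub_eq_half_sum_abs_sub {ι : Type*} (s : Finset ι) {p q : ι → ℝ}
    (h : ∑ i ∈ s, p i = ∑ i ∈ s, q i) :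
    ∑ i ∈ s, (p i - q i)⁻ = (1 / 2) * ∑ i ∈ s, |p i - q i| := by
  simpa only [← posPart_neg, neg_sub, abs_sub_comm] using
    sum_posPart_sub_eq_half_sum_abs_sub s h.symm

theorem sum_rpow_sub_sum_rpow_le_powerSumGap {ι : Type*} [Fintype ι] [Nontrivial ι] {α : ℝ}
    (hα : 1 ≤ α) {p q : ι → ℝ} (hp : ∀ i, 0 ≤ p i) (hq : ∀ i, 0 ≤ q i)
    (hp1 : ∑ i, p i = 1) (hq1 : ∑ i, q i = 1) :
    ∑ i, q i ^ α - ∑ i, p i ^ α ≤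
      powerSumGap (Fintype.card ι) α ((1 / 2) * ∑ i, |p i - q i|) := by
  set t := (1 / 2) * ∑ i, |p i - q i|
  set v := fun i => (p i - q i)⁺
  set u := fun i => (p i - q i)⁻
  set r := fun i => p i ⊓ q i
  have hv : ∀ i, 0 ≤ v i := fun i => posPart_nonneg _
  have hu : ∀ i, 0 ≤ u i := fun i => negPart_nonneg _
  have hr : ∀ i, 0 ≤ r i := fun i => le_inf (hp i) (hq i)
  have hrv : ∀ i, r i + v i = p i := fun i => by
    simp only [r, v, inf_eq_sub_posPart_sub, sub_add_cancel]
  have hru : ∀ i, r i + u i = q i := fun i => by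
    have := posPart_sub_negPart (p i - q i)
    linarith [hrv i]
  have hpq : ∑ i, p i = ∑ i, q i := hp1.trans hq1.symm
  have hsum_v : ∑ i, v i = t := sum_posPart_sub_eq_half_sum_abs_sub univ hpq
  have hsum_u : ∑ i, u i = t := sum_negPart_sub_eq_half_sum_abs_sub univ hpq
  have hsum_r : ∑ i, r i = 1 - t := by
    have := sum_add_distrib (f := r) (g := v) (s := univ)
    simp only [hrv, hp1] at this
    linarith
  have hq_r : ∑ i, q i ^ α - ∑ i, r i ^ α ≤ 1 - (1 - t) ^ α := by
    have := (convexOn_rpow hα).sum_map_add_sub_map_le univ hr hu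
    simpa only [hru, sum_sub_distrib, hsum_r, hsum_u, sub_add_cancel, one_rpow] using this
  have hp_r : ∑ i, r i ^ α + ∑ i, v i ^ α ≤ ∑ i, p i ^ α := by
    rw [← sum_add_distrib]
    exact sum_le_sum fun i _ => hrv i ▸ add_rpow_le_rpow_add (hr i) (hv i) hα
  have hv_gap : t ^ α * ((Fintype.card ι : ℝ) - 1) ^ (1 - α) ≤ ∑ i, v i ^ α := by
    obtain ⟨i₀, -, hi₀⟩ := exists_le_of_sum_le univ_nonempty hpq.le
    rw [← hsum_v]
    exact rpow_sum_mul_card_sub_one_rpow_le_sum_rpow hα hv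
      (posPart_eq_zero.2 (sub_nonpos.2 hi₀))
  rw [powerSumGap]
  linarith

theorem abs_sum_rpow_sub_sum_rpow_le_powerSumGap {ι : Type*} [Fintype ι] [Nontrivial ι]
    {α ε : ℝ} (hα : 1 ≤ α) {p q : ι → ℝ} (hp : ∀ i, 0 ≤ p i) (hq : ∀ i, 0 ≤ q i)
    (hp1 : ∑ i, p i = 1) (hq1 : ∑ i, q i = 1) (hpq : (1 / 2) * ∑ i, |p i - q i| ≤ ε)
    (hε : ε ≤ 1 - 1 / Fintype.card ι) :
    |∑ i, p i ^ α - ∑ i, q i ^ α| ≤ powerSumGap (Fintype.card ι) α ε := by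
  have hcard : (1 : ℝ) < Fintype.card ι := Nat.one_lt_cast.2 Fintype.one_lt_card
  have hqp : (1 / 2) * ∑ i, |q i - p i| = (1 / 2) * ∑ i, |p i - q i| := by
    simp only [abs_sub_comm]
  have hgap : powerSumGap (Fintype.card ι) α ((1 / 2) * ∑ i, |p i - q i|) ≤
      powerSumGap (Fintype.card ι) α ε :=
    monotoneOn_powerSumGap hα hcard ⟨by positivity, hpq.trans hε⟩
      ⟨(by positivity : (0 : ℝ) ≤ _).trans hpq, hε⟩ hpq
  have h₁ := sum_rpow_sub_sum_rpow_le_powerSumGap hα hp hq hp1 hq1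
  have h₂ := sum_rpow_sub_sum_rpow_le_powerSumGap hα hq hp hq1 hp1
  rw [hqp] at h₂
  exact abs_sub_le_iff.2 ⟨by linarith, by linarith⟩

theorem Fin.sum_ite_val_eq_zero {R : Type*} [Ring R] {d : ℕ} [NeZero d] (a b : R) :
    ∑ i : Fin d, (if (i : ℕ) = 0 then a else b) = a + ((d : R) - 1) * b := by
  obtain ⟨n, rfl⟩ := Nat.exists_eq_succ_of_ne_zero (NeZero.ne d)
  simp [Fin.sum_univ_succ]

theorem sum_rpow_sub_sum_rpow_eq_powerSumGap {d : ℕ} (hd : 1 < d) {α ε : ℝ} (hα : α ≠ 0)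
    (hε : 0 ≤ ε) :
    ∑ i : Fin d, (if (i : ℕ) = 0 then (1 : ℝ) else 0) ^ α -
        ∑ i : Fin d, (if (i : ℕ) = 0 then 1 - ε else ε / ((d : ℝ) - 1)) ^ α =
      powerSumGap d α ε := by
  have : NeZero d := ⟨by omega⟩
  have hd1 : (0 : ℝ) < d - 1 := by
    rw [sub_pos]; exact_mod_cast hd
  simp only [apply_ite (· ^ α), one_rpow, zero_rpow hα, Fin.sum_ite_val_eq_zero,
    div_rpow hε hd1.le, powerSumGap, rpow_sub hd1, rpow_one]
  field_simp
  ring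

/-- Tight uniform continuity bound for the α-Tsallis entropy, α > 1, with equality
at `q = (1,0,…,0)` and `p = (1-ε, ε/(d-1), …, ε/(d-1))`. -/
theorem stmt13 {d : ℕ} (hd : 2 ≤ d) (α : ℝ) (hα : 1 < α)
    (ε : ℝ) (hε0 : 0 ≤ ε) (hε1 : ε ≤ 1 - 1 / d)
    (T : (Fin d → ℝ) → ℝ)
    (hT : ∀ p, T p = (1 / (1 - α)) * ((∑ i, p i ^ α) - 1)) :
    (∀ p q : Fin d → ℝ,
        ((∀ i, 0 ≤ p i) ∧ ∑ i, p i = 1) → ((∀ i, 0 ≤ q i) ∧ ∑ i, q i = 1) →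
        (1 / 2) * ∑ i, |p i - q i| ≤ ε →
        |T p - T q| ≤ (1 / (1 - α)) *
          (ε ^ α * ((d : ℝ) - 1) ^ (1 - α) + (1 - ε) ^ α - 1)) ∧
      (∀ p q : Fin d → ℝ,
        (p = fun i : Fin d => if (i : ℕ) = 0 then 1 - ε else ε / ((d : ℝ) - 1)) →
        (q = fun i : Fin d => if (i : ℕ) = 0 then (1 : ℝ) else 0) →
        |T p - T q| = (1 / (1 - α)) *
          (ε ^ α * ((d : ℝ) - 1) ^ (1 - α) + (1 - ε) ^ α - 1)) := by
  have : Nontrivial (Fin d) := Fin.nontrivial_iff_two_le.2 hd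
  have hd' : (1 : ℝ) < d := by exact_mod_cast hd
  have hcoef : 0 < 1 / (α - 1) := by rw [one_div_pos]; linarith
  have hT_sub : ∀ p q, T p - T q = 1 / (α - 1) * (∑ i, q i ^ α - ∑ i, p i ^ α) := by
    intro p q
    rw [hT, hT, ← neg_sub α, div_neg]
    ring
  have hRHS : 1 / (1 - α) * (ε ^ α * ((d : ℝ) - 1) ^ (1 - α) + (1 - ε) ^ α - 1) =
      1 / (α - 1) * powerSumGap d α ε := by
    rw [powerSumGap, ← neg_sub α, div_neg]
    ring
  refine ⟨fun p q ⟨hp, hp1⟩ ⟨hq, hq1⟩ hpq => ?_, ?_⟩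
  · have := abs_sum_rpow_sub_sum_rpow_le_powerSumGap hα.le hp hq hp1 hq1 hpq
      (by rwa [Fintype.card_fin])
    rw [Fintype.card_fin] at this
    rw [hT_sub, hRHS, abs_mul, abs_of_pos hcoef, abs_sub_comm]
    gcongr
  · rintro p q rfl rfl
    rw [hT_sub, hRHS, sum_rpow_sub_sum_rpow_eq_powerSumGap hd (by linarith) hε0,
      abs_of_nonneg (mul_nonneg hcoef.le (powerSumGap_nonneg hα.le hd' ⟨hε0, hε1⟩))]
end
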